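/- arXiv:2102.01104 — 4 statements merged into one kernel-verified Lean document; each statement's English description precedes it below -/
import Mathlib

section
/- Let L ⊣ F ⊣ R be a string of adjoint functors. If L is fully faithful, then R is fully faithful. -/
open CategoryTheory

universe v1 v2 u1 u2

/-- In a string of adjoint functors L ⊣ F ⊣ R, if L is fully
faithful then R is fully faithful. -/
theorem right_fullyFaithful_of_left {M : Type u1} {N : Type u2}
    [Category.{v1} M] [Category.{v2} N]
    (F : N ⥤ M) (L R : M ⥤ N) (adj1 : L ⊣ F) (adj2 : F ⊣ R)
    [L.Full] [L.Faithful] :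
    R.Full ∧ R.Faithful :=
  let hR := (Adjunction.Triple.mk adj1 adj2).fullyFaithfulEquiv (.ofFullyFaithful L)
  ⟨hR.full, hR.faithful⟩
end

section
/- Let L ⊣ F ⊣ R be a string of adjoint functors in which L is fully faithful. Then the composite natural transformation F ⟹ F R F ⟹ F (whiskered unit of F ⊣ R followed by whiskered counit of F ⊣ R), which equals the identity of F, factors through natural isomorphisms; in particular F η' : F ⟹ F R F is a natural isomorphism. -/
open CategoryTheory

universe v1 v2 u1 u2

/-- If L is fully faithful, then the whiskered unit
F η' : F ⟹ F R F of F ⊣ R is a natural isomorphism. -/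
theorem whiskered_unit_isIso_of_left_fullyFaithful {M : Type u1} {N : Type u2}
    [Category.{v1} M] [Category.{v2} N]
    (F : N ⥤ M) (L R : M ⥤ N) (adj1 : L ⊣ F) (adj2 : F ⊣ R)
    [L.Full] [L.Faithful] :
    IsIso (Functor.whiskerRight adj2.unit F) := by
  have hR : R.FullyFaithful :=
    (Adjunction.Triple.mk adj1 adj2).fullyFaithfulEquiv (.ofFullyFaithful L)
  have := hR.full
  have := hR.faithful
  exact adj2.whiskerRight_unit_iso_of_R_fully_faithful
end

section
/- Let L ⊣ F ⊣ R be a string of adjoint functors in which R is fully faithful. Then the whiskered transformation η F : F ⟹ F L F (unit of L ⊣ F whiskered by F) is a natural isomorphism. -/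
open CategoryTheory

universe v1 v2 u1 u2

/-- If R is fully faithful, then the whiskered unit
η F : F ⟹ F L F of L ⊣ F is a natural isomorphism. -/
theorem whiskered_unit_isIso_of_right_fullyFaithful {M : Type u1} {N : Type u2}
    [Category.{v1} M] [Category.{v2} N]
    (F : N ⥤ M) (L R : M ⥤ N) (adj1 : L ⊣ F) (adj2 : F ⊣ R)
    [R.Full] [R.Faithful] :
    IsIso (Functor.whiskerLeft F adj1.unit) := by
  have : IsIso adj2.counit := adj2.counit_isIso_of_R_fully_faithful
  have : IsIso adj1.unit :=
    (Adjunction.Triple.mk adj1 adj2).isIso_unit_iff_isIso_counit.mpr this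
  infer_instance
end

section
/- Let L ⊣ F ⊣ R be a string of adjoint functors. The whiskered counit F ε : F L F ⟹ F of L ⊣ F is a natural isomorphism if and only if the whiskered unit F η' : F ⟹ F R F of F ⊣ R is a natural isomorphism. -/
/-!
Since `η F` is a section of `F ε`, the map `F ε` is invertible exactly when the comultiplication
`L η F` of the comonad `F ⋙ L` is; dually `F η'` is invertible exactly when the multiplication
`R ε' F` of the monad `F ⋙ R` is. Under the adjunction `F ⋙ L ⊣ F ⋙ R` these two transformations
are conjugate, and conjugation preserves and reflects isomorphisms.
-/

open CategoryTheory

universe v1 v2 u1 u2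

namespace CategoryTheory.Adjunction

variable {M : Type u1} {N : Type u2} [Category.{v1} M] [Category.{v2} N]

lemma isIso_map_counit_app_iff_isIso_map_unit_app {L : M ⥤ N} {F : N ⥤ M} (adj : L ⊣ F)
    (X : N) : IsIso (F.map (adj.counit.app X)) ↔ IsIso (L.map (adj.unit.app (F.obj X))) := by
  constructor
  · intro _
    rw [IsIso.eq_inv_of_inv_hom_id (adj.right_triangle_components X)]
    infer_instance
  · intro _
    -- both sides are left inverses of the isomorphism `L.map (adj.unit.app (F.obj X))`
    have hε : adj.counit.app (L.obj (F.obj X)) = L.map (F.map (adj.counit.app X)) := by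
      rw [← cancel_epi (L.map (adj.unit.app (F.obj X))), ← L.map_comp,
        adj.right_triangle_components]
      simp
    refine ⟨adj.unit.app (F.obj X), ?_, adj.right_triangle_components X⟩
    dsimp only [Functor.comp_obj, Functor.id_obj]
    rw [← adj.unit_naturality, ← hε, adj.right_triangle_components]

lemma isIso_map_unit_app_iff_isIso_map_counit_app {F : N ⥤ M} {R : M ⥤ N} (adj : F ⊣ R)
    (X : N) : IsIso (F.map (adj.unit.app X)) ↔ IsIso (R.map (adj.counit.app (F.obj X))) := by
  simpa [isIso_op_iff] using isIso_map_counit_app_iff_isIso_map_unit_app adj.op (Opposite.op X)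

lemma conjugateEquiv_comp_id_unit {L : M ⥤ N} {F : N ⥤ M} {R : M ⥤ N} (adj₁ : L ⊣ F)
    (adj₂ : F ⊣ R) : conjugateEquiv (adj₁.comp adj₂) Adjunction.id adj₁.unit = adj₂.counit := by
  ext Z
  simp

lemma isIso_whiskerLeft_whiskerRight_unit_iff {L : M ⥤ N} {F : N ⥤ M} {R : M ⥤ N}
    (adj₁ : L ⊣ F) (adj₂ : F ⊣ R) :
    IsIso (F.whiskerLeft (Functor.whiskerRight adj₁.unit L)) ↔
      IsIso (Functor.whiskerRight (F.whiskerLeft adj₂.counit) R) := by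
  let adjComonad := adj₂.comp ((adj₁.comp adj₂).comp adj₁)
  let adjMonad := adj₂.comp (Adjunction.id.comp adj₁)
  have hconj :
      conjugateEquiv adjComonad adjMonad (F.whiskerLeft (Functor.whiskerRight adj₁.unit L)) =
        Functor.whiskerRight (F.whiskerLeft adj₂.counit) R := by
    rw [conjugateEquiv_whiskerLeft, conjugateEquiv_whiskerRight, conjugateEquiv_comp_id_unit]
  rw [← hconj]
  exact ⟨fun _ => inferInstance, fun _ => conjugateEquiv_of_iso adjComonad adjMonad _⟩

end CategoryTheory.Adjunction

/-- The whiskered counit F ε : F L F ⟹ F of L ⊣ F is a natural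
isomorphism iff the whiskered unit F η' : F ⟹ F R F of F ⊣ R is. -/
theorem whiskered_counit_isIso_iff_whiskered_unit_isIso {M : Type u1} {N : Type u2}
    [Category.{v1} M] [Category.{v2} N]
    (F : N ⥤ M) (L R : M ⥤ N) (adj1 : L ⊣ F) (adj2 : F ⊣ R) :
    IsIso (Functor.whiskerRight adj1.counit F) ↔ IsIso (Functor.whiskerRight adj2.unit F) :=
  calc IsIso (Functor.whiskerRight adj1.counit F)
      ↔ ∀ X, IsIso (F.map (adj1.counit.app X)) := NatTrans.isIso_iff_isIso_app _
    _ ↔ ∀ X, IsIso (L.map (adj1.unit.app (F.obj X))) :=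
        forall_congr' (Adjunction.isIso_map_counit_app_iff_isIso_map_unit_app adj1)
    _ ↔ IsIso (F.whiskerLeft (Functor.whiskerRight adj1.unit L)) :=
        (NatTrans.isIso_iff_isIso_app (F.whiskerLeft (Functor.whiskerRight adj1.unit L))).symm
    _ ↔ IsIso (Functor.whiskerRight (F.whiskerLeft adj2.counit) R) :=
        Adjunction.isIso_whiskerLeft_whiskerRight_unit_iff adj1 adj2
    _ ↔ ∀ X, IsIso (R.map (adj2.counit.app (F.obj X))) := NatTrans.isIso_iff_isIso_app _
    _ ↔ ∀ X, IsIso (F.map (adj2.unit.app X)) :=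
        forall_congr' fun X => (Adjunction.isIso_map_unit_app_iff_isIso_map_counit_app adj2 X).symm
    _ ↔ IsIso (Functor.whiskerRight adj2.unit F) :=
        (NatTrans.isIso_iff_isIso_app (Functor.whiskerRight adj2.unit F)).symm
end
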